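/- Let J ⊆ I ⊊ R be ideals of a Noetherian commutative ring R such that the image of I in R/J contains a regular element of R/J. If p ∈ Ass_R(R/J) is an associated prime of R/J, then the extended–contracted prime p̃ = ⊕_{t≥0} (p ∩ I^t) u^t ⊆ Rees_R(I) is an associated prime of the Aluffi algebra 𝒜_{R↠R/J}(I/J) viewed as a module over Rees_R(I). -/

import Mathlib

set_option synthInstance.maxHeartbeats 1000000

open Polynomial

variable {R : Type*} [CommRing R]

/-- The defining ideal `(J, J̃)·Rees_R(I)` of the Aluffi algebra inside the Rees algebra. -/
noncomputable def aluffiIdeal (I J : Ideal R) : Ideal (reesAlgebra I) :=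
  Ideal.span {x : reesAlgebra I | ∃ a ∈ J, (x : R[X]) = C a ∨ (x : R[X]) = C a * X}

/-- The (R-embedded) Aluffi algebra of `I/J`, presented as `Rees_R(I)/(J, J̃)Rees_R(I)`. -/
noncomputable abbrev AluffiAlgebra (I J : Ideal R) :=
  reesAlgebra I ⧸ aluffiIdeal I J

/-- The extended–contracted ideal `𝔭̃ = 𝔭R[u] ∩ Rees_R(I) = ⊕_{t≥0} (𝔭 ∩ I^t)u^t` of an
ideal `𝔭 ⊆ R` inside the Rees algebra of `I`. -/
noncomputable def tildeIdeal (I p : Ideal R) : Ideal (reesAlgebra I) :=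
  Ideal.comap ((reesAlgebra I).val.toRingHom) (p.map (Polynomial.C : R →+* R[X]))

/-! Write `p = (J : x)`, pick `b ∈ I` regular on `R/J`, and let `k` come from Artin–Rees, so
that `(J ∩ Iⁿ)·Iᵏ ⊆ J·Iⁿ`. The annihilator of the class of `x bᵏ` (placed in degree `0`) in the
Aluffi algebra is then exactly `p̃`: the component `f uⁿ` kills it iff `f x bᵏ ∈ J·Iⁿ⁻¹`. If so,
`f x bᵏ ∈ J`, and regularity of `b` gives `f x ∈ J`, i.e. `f ∈ p`; conversely, if `f x ∈ J` then
`f x ∈ J ∩ Iⁿ`, and Artin–Rees puts `f x bᵏ` in `J·Iⁿ`. -/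

theorem Ideal.exists_inf_pow_mul_pow_le [IsNoetherianRing R] (I J : Ideal R) :
    ∃ k, ∀ n, (J ⊓ I ^ n) * I ^ k ≤ J * I ^ n := by
  obtain ⟨k, hk⟩ := I.exists_pow_inf_eq_pow_smul (M := R) J
  refine ⟨k, fun n => ?_⟩
  rcases le_or_gt k n with hkn | hnk
  · have hAR : J ⊓ I ^ n ≤ J * I ^ (n - k) := by
      have h := hk n hkn
      simp only [smul_eq_mul, mul_top] at h
      rw [inf_comm, h, mul_comm]
      exact mul_mono_left inf_le_right
    calc (J ⊓ I ^ n) * I ^ k ≤ J * I ^ (n - k) * I ^ k := mul_mono_left hAR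
      _ = J * I ^ n := by rw [mul_assoc, ← pow_add, Nat.sub_add_cancel hkn]
  · calc (J ⊓ I ^ n) * I ^ k ≤ J * I ^ k := mul_mono_left inf_le_left
      _ ≤ J * I ^ n := mul_mono_right (pow_le_pow_right hnk.le)

instance tildeIdeal.isPrime (I p : Ideal R) [p.IsPrime] : (tildeIdeal I p).IsPrime :=
  Ideal.IsPrime.comap _

theorem mem_tildeIdeal_iff {I p : Ideal R} {f : reesAlgebra I} :
    f ∈ tildeIdeal I p ↔ ∀ n, (f : R[X]).coeff n ∈ p :=
  Ideal.mem_map_C_iff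

theorem aluffiIdeal_le_tildeIdeal (I J : Ideal R) : aluffiIdeal I J ≤ tildeIdeal I J := by
  rw [aluffiIdeal, Ideal.span_le]
  rintro g ⟨a, ha, hg | hg⟩
  · exact (hg ▸ Ideal.mem_map_of_mem C ha : (g : R[X]) ∈ J.map C)
  · exact (hg ▸ Ideal.mul_mem_right X _ (Ideal.mem_map_of_mem C ha) : (g : R[X]) ∈ J.map C)

theorem mem_aluffiIdeal_of_coe_eq_monomial_succ {I J : Ideal R} (hJI : J ≤ I) {n : ℕ} {a : R}
    (ha : a ∈ J * I ^ n) {g : reesAlgebra I} (hg : (g : R[X]) = monomial (n + 1) a) :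
    g ∈ aluffiIdeal I J := by
  have hmem {c : R} (hc : c ∈ J * I ^ n) : monomial (n + 1) c ∈ reesAlgebra I :=
    reesAlgebra.monomial_mem.mpr (pow_succ' I n ▸ Ideal.mul_mono_left hJI hc)
  obtain rfl : g = ⟨_, hmem ha⟩ := Subtype.ext hg
  clear hg
  induction ha using Submodule.mul_induction_on' with
  | mem_mul_mem j hj t ht =>
    have hjX : C j * X ∈ reesAlgebra I :=
      C_mul_X_eq_monomial (R := R) ▸ reesAlgebra.monomial_mem.mpr (by simpa using hJI hj)
    have hfactor : (⟨_, hmem (Ideal.mul_mem_mul hj ht)⟩ : reesAlgebra I) =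
        ⟨C j * X, hjX⟩ * ⟨monomial n t, reesAlgebra.monomial_mem.mpr ht⟩ :=
      Subtype.ext (by simp [C_mul_X_eq_monomial, monomial_mul_monomial, add_comm])
    rw [hfactor]
    exact Ideal.mul_mem_right _ _ (Ideal.subset_span ⟨j, hj, Or.inr rfl⟩)
  | add u hu v hv hu' hv' =>
    have hsplit : (⟨_, hmem (add_mem hu hv)⟩ : reesAlgebra I) = ⟨_, hmem hu⟩ + ⟨_, hmem hv⟩ :=
      Subtype.ext (map_add _ u v)
    rw [hsplit]
    exact add_mem hu' hv'

theorem mem_aluffiIdeal_of_coe_eq_monomial {I J : Ideal R} (hJI : J ≤ I) {n : ℕ} {a : R}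
    (ha : a ∈ J * I ^ (n - 1)) {g : reesAlgebra I} (hg : (g : R[X]) = monomial n a) :
    g ∈ aluffiIdeal I J := by
  cases n with
  | zero =>
    rw [pow_zero, Ideal.one_eq_top, Ideal.mul_top] at ha
    exact Ideal.subset_span ⟨a, ha, Or.inl (by rw [hg, monomial_zero_left])⟩
  | succ n => exact mem_aluffiIdeal_of_coe_eq_monomial_succ hJI ha hg

/-- In degree `0` the truncated subtraction gives `J * I ^ 0 = J`, as it should. -/
theorem mem_aluffiIdeal_of_coeff_mem {I J : Ideal R} (hJI : J ≤ I) {g : reesAlgebra I}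
    (hg : ∀ n, (g : R[X]).coeff n ∈ J * I ^ (n - 1)) : g ∈ aluffiIdeal I J := by
  have hsum : g = ∑ n ∈ Finset.range ((g : R[X]).natDegree + 1),
      (⟨monomial n ((g : R[X]).coeff n), reesAlgebra.monomial_mem.mpr (g.2 n)⟩ :
        reesAlgebra I) :=
    Subtype.ext (by push_cast; exact (g : R[X]).as_sum_range' _ (Nat.lt_succ_self _))
  rw [hsum]
  exact Ideal.sum_mem _ fun n _ => mem_aluffiIdeal_of_coe_eq_monomial hJI (hg n) rfl

theorem Ideal.mul_pow_mem_iff_of_mk_mem_nonZeroDivisors {J : Ideal R} {b : R}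
    (hb : Ideal.Quotient.mk J b ∈ nonZeroDivisors (R ⧸ J)) (r : R) (k : ℕ) :
    r * b ^ k ∈ J ↔ r ∈ J := by
  simp only [← Ideal.Quotient.eq_zero_iff_mem, map_mul, map_pow,
    mul_right_mem_nonZeroDivisors_eq_zero_iff (pow_mem hb k)]

theorem smul_mem_aluffiIdeal_iff {I J : Ideal R} (hJI : J ≤ I) {b : R} (hbI : b ∈ I)
    (hb : Ideal.Quotient.mk J b ∈ nonZeroDivisors (R ⧸ J)) {k : ℕ}
    (hk : ∀ n, (J ⊓ I ^ n) * I ^ k ≤ J * I ^ n) (x : R) (f : reesAlgebra I) :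
    (x * b ^ k) • f ∈ aluffiIdeal I J ↔ ∀ n, (f : R[X]).coeff n * x ∈ J := by
  have hcoeff (n : ℕ) : (((x * b ^ k) • f : reesAlgebra I) : R[X]).coeff n =
      (f : R[X]).coeff n * x * b ^ k := by
    rw [Subalgebra.coe_smul, coeff_smul, smul_eq_mul]
    ring
  constructor
  · intro hf n
    have h := mem_tildeIdeal_iff.mp (aluffiIdeal_le_tildeIdeal I J hf) n
    rwa [hcoeff, Ideal.mul_pow_mem_iff_of_mk_mem_nonZeroDivisors hb] at h
  · refine fun hf => mem_aluffiIdeal_of_coeff_mem hJI fun n => ?_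
    have hfn : (f : R[X]).coeff n * x ∈ J ⊓ I ^ n := ⟨hf n, Ideal.mul_mem_right _ _ (f.2 n)⟩
    rw [hcoeff]
    exact Ideal.mul_mono_right (Ideal.pow_le_pow_right (Nat.sub_le n 1))
      (hk n (Ideal.mul_mem_mul hfn (Ideal.pow_mem_pow hbI k)))

theorem aluffi_associated_primes_general [IsNoetherianRing R]
    (I J : Ideal R) (hJI : J ≤ I)
    (hreg : ∃ b ∈ I, Ideal.Quotient.mk J b ∈ nonZeroDivisors (R ⧸ J)) :
    ∀ p ∈ associatedPrimes R (R ⧸ J),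
      IsAssociatedPrime (tildeIdeal I p) (AluffiAlgebra I J) := by
  rintro p hp
  obtain ⟨hprime, x, hpx⟩ := isAssociatedPrime_iff.mp hp
  obtain ⟨x, rfl⟩ := Ideal.Quotient.mk_surjective x
  have hp_iff (r : R) : r ∈ p ↔ r * x ∈ J := by
    rw [hpx, Submodule.mem_colon_singleton, Submodule.mem_bot, Algebra.smul_def,
      Ideal.Quotient.algebraMap_eq, ← map_mul, Ideal.Quotient.eq_zero_iff_mem]
  obtain ⟨b, hbI, hb⟩ := hreg
  obtain ⟨k, hk⟩ := I.exists_inf_pow_mul_pow_le J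
  refine isAssociatedPrime_iff.mpr
    ⟨inferInstance, Ideal.Quotient.mk _ (algebraMap R _ (x * b ^ k)), ?_⟩
  ext f
  rw [Submodule.mem_colon_singleton, Submodule.mem_bot, ← Ideal.Quotient.mk_eq_mk,
    ← Submodule.Quotient.mk_smul, Ideal.Quotient.mk_eq_mk, Ideal.Quotient.eq_zero_iff_mem,
    smul_eq_mul, mul_comm, ← Algebra.smul_def,
    smul_mem_aluffiIdeal_iff hJI hbI hb hk, mem_tildeIdeal_iff]
  simp only [hp_iff]

/-- let `J ⊆ I ⊊ R` be ideals of a Noetherian ring such that `I/J`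
contains a regular element of `R/J`.  If `p` is an associated prime of `R/J` then
`p̃ = ⊕_{t≥0}(p ∩ I^t)u^t` is an associated prime of the Aluffi algebra, viewed as a
module over `Rees_R(I)`. -/
theorem aluffi_associated_primes [IsNoetherianRing R]
    (I J : Ideal R) (hJI : J ≤ I) (hI : I ≠ ⊤)
    (hreg : ∃ b ∈ I, Ideal.Quotient.mk J b ∈ nonZeroDivisors (R ⧸ J)) :
    ∀ p ∈ associatedPrimes R (R ⧸ J),
      IsAssociatedPrime (tildeIdeal I p) (AluffiAlgebra I J) :=
  aluffi_associated_primes_general I J hJI hreg
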